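/- arXiv:1206.4598 — 2 statements merged into one kernel-verified Lean document; each statement's English description precedes it below -/
import Mathlib

section
/- Let Φ : B^3 → B^3 be defined by Φ(μ₁,μ₂,μ₃) = ((μ₂∧μ₃) ⊕ μ₁ ⊕ μ₂, (μ₁∧μ₃) ⊕ μ₂ ⊕ μ₃, (μ₁∧μ₂) ⊕ μ₁ ⊕ μ₃), and let σ be the cyclic permutation of {1,2,3} with σ(1)=3, σ(2)=1, σ(3)=2, inducing π_σ : B^3 → B^3, π_σ(μ₁,μ₂,μ₃) = (μ_{σ(1)}, μ_{σ(2)}, μ_{σ(3)}). Then (π_σ, π_σ) is an automorphism of Φ: π_σ ∘ Φ^ν = Φ^{π_σ(ν)} ∘ π_σ for all ν ∈ B^3. -/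
/-! Φ is built from one Boolean function `f` applied to the cyclic shifts of its argument,
`Φ_i(μ) = f(μ_i, μ_{i+1}, μ_{i+2})`, so it commutes with the rotation π_σ of the coordinates.
For any map commuting with a coordinate permutation, permuting the coordinates before updating
the set `ν` of coordinates is the same as updating the permuted set `π_σ(ν)` afterwards. -/

def asy3 (Φ : Bool × Bool × Bool → Bool × Bool × Bool) (ν μ : Bool × Bool × Bool) :
    Bool × Bool × Bool :=
  (if ν.1 then (Φ μ).1 else μ.1,
   if ν.2.1 then (Φ μ).2.1 else μ.2.1,
   if ν.2.2 then (Φ μ).2.2 else μ.2.2)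

def rotate3 {α : Type*} (μ : α × α × α) : α × α × α := (μ.2.2, μ.1, μ.2.1)

theorem rotate3_bijective {α : Type*} : Function.Bijective (rotate3 (α := α)) :=
  Function.bijective_iff_has_inverse.mpr
    ⟨fun μ => (μ.2.1, μ.2.2, μ.1), fun _ => rfl, fun _ => rfl⟩

def cyclicMap3 {α β : Type*} (f : α → α → α → β) (μ : α × α × α) : β × β × β :=
  (f μ.1 μ.2.1 μ.2.2, f μ.2.1 μ.2.2 μ.1, f μ.2.2 μ.1 μ.2.1)

theorem cyclicMap3_comp_rotate3 {α β : Type*} (f : α → α → α → β) :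
    cyclicMap3 f ∘ rotate3 = rotate3 ∘ cyclicMap3 f :=
  rfl

theorem rotate3_comp_asy3 {Φ : Bool × Bool × Bool → Bool × Bool × Bool}
    (hΦ : Φ ∘ rotate3 = rotate3 ∘ Φ) (ν : Bool × Bool × Bool) :
    rotate3 ∘ asy3 Φ ν = asy3 Φ (rotate3 ν) ∘ rotate3 := by
  funext μ
  have hμ : Φ (rotate3 μ) = rotate3 (Φ μ) := congrFun hΦ μ
  simp only [Function.comp_apply, asy3, hμ]
  rfl

theorem stmt12 (Φ πσ : Bool × Bool × Bool → Bool × Bool × Bool)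
    (hΦ : ∀ μ : Bool × Bool × Bool,
      Φ μ = (xor (xor (μ.2.1 && μ.2.2) μ.1) μ.2.1,
             xor (xor (μ.1 && μ.2.2) μ.2.1) μ.2.2,
             xor (xor (μ.1 && μ.2.1) μ.1) μ.2.2))
    (hπ : ∀ μ : Bool × Bool × Bool, πσ μ = (μ.2.2, μ.1, μ.2.1)) :
    Function.Bijective πσ ∧ ∀ ν, πσ ∘ asy3 Φ ν = asy3 Φ (πσ ν) ∘ πσ := by
  obtain rfl : πσ = rotate3 := funext hπ
  obtain rfl : Φ = cyclicMap3 fun x y z => xor (xor (y && z) x) y := by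
    funext μ
    simp only [hΦ, cyclicMap3, Bool.and_comm μ.1, Bool.xor_right_comm _ μ.1]
  exact ⟨rotate3_bijective, rotate3_comp_asy3 (cyclicMap3_comp_rotate3 _)⟩
end

section
/- Let Φ : B^n → B^n and λ ∈ B^n. The pair (θ^λ, id) is an automorphism of Φ (i.e., θ^λ ∘ Φ^ν = Φ^ν ∘ θ^λ for all ν ∈ B^n) if and only if for all μ ∈ B^n, Φ(μ ⊕ λ) = Φ(μ) ⊕ λ. -/
def asy {n : ℕ} (Φ : (Fin n → Bool) → (Fin n → Bool)) (ν : Fin n → Bool)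
    (μ : Fin n → Bool) : Fin n → Bool :=
  fun i => if ν i then Φ μ i else μ i

def theta {n : ℕ} (l : Fin n → Bool) (μ : Fin n → Bool) : Fin n → Bool :=
  fun i => xor (μ i) (l i)

section

variable {n : ℕ} (Φ : (Fin n → Bool) → (Fin n → Bool))

theorem asy_const_true : asy Φ (fun _ => true) = Φ := rfl

theorem theta_asy_apply (l ν μ : Fin n → Bool) (i : Fin n) :
    theta l (asy Φ ν μ) i = if ν i then theta l (Φ μ) i else theta l μ i :=
  apply_ite (xor · (l i)) _ _ _

theorem theta_comp_asy_of_commute {l : Fin n → Bool}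
    (h : ∀ μ, Φ (theta l μ) = theta l (Φ μ)) (ν : Fin n → Bool) :
    theta l ∘ asy Φ ν = asy Φ ν ∘ theta l := by
  funext μ i
  rw [Function.comp_apply, theta_asy_apply, Function.comp_apply, asy, h]

end

theorem stmt14 {n : ℕ} (Φ : (Fin n → Bool) → (Fin n → Bool)) (l : Fin n → Bool) :
    (∀ ν, theta l ∘ asy Φ ν = asy Φ ν ∘ theta l) ↔
      ∀ μ, Φ (theta l μ) = theta l (Φ μ) := by
  refine ⟨fun h μ => ?_, theta_comp_asy_of_commute Φ⟩
  simpa only [asy_const_true, Function.comp_apply] using (congrFun (h fun _ => true) μ).symm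
end
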